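/- arXiv:2510.07241 — 2 statements merged into one kernel-verified Lean document; each statement's English description precedes it below -/
import Mathlib

section
/- The function f(α) = ((1−α)/(1+α))^(1/(2α)) is strictly decreasing on the interval (0,1). -/
open Real Set

noncomputable def Haux : ℝ → ℝ := fun α => 2 * α / (1 - α ^ 2) - (Real.log (1 + α) - Real.log (1 - α))

noncomputable def Gaux : ℝ → ℝ := fun α => (Real.log (1 + α) - Real.log (1 - α)) / α

lemma Haux_hasDeriv {x : ℝ} (hx0 : 0 ≤ x) (hx1 : x < 1) :
    HasDerivAt Haux (4 * x ^ 2 / (1 - x ^ 2) ^ 2) x := by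
  have h1p : (0:ℝ) < 1 + x := by linarith
  have h1m : (0:ℝ) < 1 - x := by linarith
  have hden : (1 - x ^ 2) ≠ 0 := by nlinarith
  have hdiv : HasDerivAt (fun α : ℝ => 2 * α / (1 - α ^ 2))
      ((2 * (1 - x ^ 2) - 2 * x * (-(2 * x))) / (1 - x ^ 2) ^ 2) x := by
    have ha : HasDerivAt (fun α : ℝ => 2 * α) 2 x := by
      simpa using (hasDerivAt_id x).const_mul 2
    have hb : HasDerivAt (fun α : ℝ => 1 - α ^ 2) (-(2 * x)) x := by
      have := (hasDerivAt_pow 2 x).const_sub 1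
      simpa using this
    exact ha.div hb hden
  have hlog1 : HasDerivAt (fun α : ℝ => Real.log (1 + α)) (1 / (1 + x)) x := by
    have : HasDerivAt (fun α : ℝ => 1 + α) 1 x := by
      simpa using (hasDerivAt_id x).const_add 1
    simpa using this.log (ne_of_gt h1p)
  have hlog2 : HasDerivAt (fun α : ℝ => Real.log (1 - α)) (-1 / (1 - x)) x := by
    have : HasDerivAt (fun α : ℝ => 1 - α) (-1) x := by
      simpa using (hasDerivAt_id x).const_sub 1
    simpa using this.log (ne_of_gt h1m)
  have h := hdiv.sub (hlog1.sub hlog2)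
  refine h.congr_deriv ?_
  field_simp
  ring

lemma Haux_strictMono : StrictMonoOn Haux (Ico (0:ℝ) 1) := by
  apply strictMonoOn_of_deriv_pos (convex_Ico 0 1)
  · intro x hx
    exact (Haux_hasDeriv hx.1 hx.2).continuousAt.continuousWithinAt
  · intro x hx
    rw [interior_Ico] at hx
    rw [(Haux_hasDeriv hx.1.le hx.2).deriv]
    have hx0 := hx.1
    have hden : (0:ℝ) < 1 - x ^ 2 := by nlinarith [hx.1, hx.2]
    exact div_pos (by positivity) (by positivity)

lemma Haux_pos {x : ℝ} (hx : x ∈ Ioo (0:ℝ) 1) : 0 < Haux x := by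
  have h0 : Haux 0 = 0 := by simp [Haux]
  have := Haux_strictMono (by constructor <;> norm_num) ⟨hx.1.le, hx.2⟩ hx.1
  rwa [h0] at this

lemma Gaux_strictMono : StrictMonoOn Gaux (Ioo (0:ℝ) 1) := by
  apply strictMonoOn_of_deriv_pos (convex_Ioo 0 1)
  · intro x hx
    have h1p : (0:ℝ) < 1 + x := by linarith [hx.1]
    have h1m : (0:ℝ) < 1 - x := by linarith [hx.2]
    have hlog1 : ContinuousAt (fun α : ℝ => Real.log (1 + α)) x :=
      (Real.continuousAt_log (ne_of_gt h1p)).comp (continuous_const.add continuous_id).continuousAt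
    have hlog2 : ContinuousAt (fun α : ℝ => Real.log (1 - α)) x :=
      (Real.continuousAt_log (ne_of_gt h1m)).comp (continuous_const.sub continuous_id).continuousAt
    exact (((hlog1.sub hlog2).div continuousAt_id (ne_of_gt hx.1)).continuousWithinAt)
  · intro x hx
    rw [interior_Ioo] at hx
    obtain ⟨hx0, hx1⟩ := hx
    have h1p : (0:ℝ) < 1 + x := by linarith
    have h1m : (0:ℝ) < 1 - x := by linarith
    have hlog1 : HasDerivAt (fun α : ℝ => Real.log (1 + α)) (1 / (1 + x)) x := by
      have : HasDerivAt (fun α : ℝ => 1 + α) 1 x := by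
        simpa using (hasDerivAt_id x).const_add 1
      simpa using this.log (ne_of_gt h1p)
    have hlog2 : HasDerivAt (fun α : ℝ => Real.log (1 - α)) (-1 / (1 - x)) x := by
      have : HasDerivAt (fun α : ℝ => 1 - α) (-1) x := by
        simpa using (hasDerivAt_id x).const_sub 1
      simpa using this.log (ne_of_gt h1m)
    have hG : HasDerivAt Gaux
        (((1 / (1 + x) - -1 / (1 - x)) * x - (Real.log (1 + x) - Real.log (1 - x)) * 1) / x ^ 2)
        x := (hlog1.sub hlog2).div (hasDerivAt_id x) (ne_of_gt hx0)
    rw [hG.deriv]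
    have key : Real.log (1 + x) - Real.log (1 - x) < 2 * x / (1 - x ^ 2) := by
      have := Haux_pos ⟨hx0, hx1⟩
      unfold Haux at this
      linarith
    have hden : (1 - x ^ 2) ≠ 0 := by nlinarith
    have heq : (1 / (1 + x) - -1 / (1 - x)) * x = 2 * x / (1 - x ^ 2) := by
      field_simp
      ring
    rw [heq]
    have hx2 : (0:ℝ) < x ^ 2 := by positivity
    apply div_pos _ hx2
    linarith

theorem maximizer_strictAnti :
    StrictAntiOn (fun α : ℝ => ((1 - α) / (1 + α)) ^ (1 / (2 * α))) (Set.Ioo 0 1) := by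
  intro a ha b hb hab
  have key : ∀ x ∈ Ioo (0:ℝ) 1,
      ((1 - x) / (1 + x)) ^ (1 / (2 * x)) = Real.exp (-(Gaux x) / 2) := by
    intro x hx
    have h1p : (0:ℝ) < 1 + x := by linarith [hx.1]
    have h1m : (0:ℝ) < 1 - x := by linarith [hx.2]
    have hbase : (0:ℝ) < (1 - x) / (1 + x) := div_pos h1m h1p
    rw [Real.rpow_def_of_pos hbase]
    congr 1
    rw [Real.log_div (ne_of_gt h1m) (ne_of_gt h1p)]
    unfold Gaux
    field_simp
    ring
  simp only
  rw [key a ha, key b hb]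
  have := Gaux_strictMono ha hb hab
  exact Real.exp_lt_exp.2 (by linarith)
end

section
/- For every α ∈ (0,1) and reals x₁ > x₂ ≥ 1/2, one has x₁^(1−α) − x₁^(1+α) < x₂^(1−α) − x₂^(1+α). In particular, if x > 1/2 then x^(1−α) − x^(1+α) < (1/2)^(1−α) − (1/2)^(1+α). -/
open Real Set

lemma khat_key (α : ℝ) (h0 : 0 < α) (h1 : α < 1) : (4:ℝ) ^ α * (1 - α) < 1 + α := by
  rcases le_or_gt α (2/5) with hle | hgt
  · -- small α : use exp bound
    have hL : Real.log 4 < 1.3862943616 := by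
      have : (4:ℝ) = 2 ^ (2:ℕ) := by norm_num
      rw [this, Real.log_pow]
      have := Real.log_two_lt_d9
      push_cast
      nlinarith
    have hLpos : 0 < Real.log 4 := Real.log_pos (by norm_num)
    set t := α * Real.log 4 with ht
    have ht1 : t < 1 := by
      have : t ≤ (2/5) * Real.log 4 := by
        apply mul_le_mul_of_nonneg_right hle hLpos.le
      nlinarith
    have htpos : 0 < t := mul_pos h0 hLpos
    have hexp : Real.exp t < (1 - t)⁻¹ := by
      have h2 : 1 - t < Real.exp (-t) := by
        have := Real.add_one_lt_exp (x := -t) (neg_ne_zero.mpr htpos.ne')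
        linarith
      rw [Real.exp_neg] at h2
      exact (lt_inv_comm₀ (by linarith) (Real.exp_pos t)).mp h2
    have h4 : (4:ℝ) ^ α = Real.exp t := by
      rw [ht, mul_comm, Real.exp_mul, Real.exp_log (by norm_num)]
    rw [h4]
    have h1α : (0:ℝ) < 1 - α := by linarith
    calc Real.exp t * (1 - α) < (1 - t)⁻¹ * (1 - α) := by
          apply mul_lt_mul_of_pos_right hexp h1α
      _ ≤ 1 + α := by
          rw [inv_mul_le_iff₀ (by linarith)]
          -- need 1 - α ≤ (1+α)(1-t), i.e. t(1+α) ≤ 2α, i.e. L(1+α) ≤ 2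
          have hLb : Real.log 4 * (1 + α) ≤ 2 := by nlinarith
          rw [ht]
          nlinarith
  · -- large α : Bernoulli
    have hb : (4:ℝ) ^ α ≤ 1 + α * 3 := by
      have := rpow_one_add_le_one_add_mul_self (s := 3) (by norm_num) h0.le h1.le
      norm_num at this ⊢
      exact this
    nlinarith [Real.rpow_pos_of_pos (show (0:ℝ) < 4 by norm_num) α]

lemma khat_anti (α : ℝ) (hα : α ∈ Set.Ioo (0:ℝ) 1) :
    StrictAntiOn (fun x : ℝ => x ^ (1 - α) - x ^ (1 + α)) (Set.Ici (1/2 : ℝ)) := by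
  obtain ⟨h0, h1⟩ := hα
  apply strictAntiOn_of_deriv_neg (convex_Ici _)
  · apply ContinuousOn.sub
    · apply ContinuousOn.rpow_const continuousOn_id
      intro x hx; left; simp at hx ⊢; linarith
    · apply ContinuousOn.rpow_const continuousOn_id
      intro x hx; left; simp at hx ⊢; linarith
  · intro x hx
    rw [interior_Ici] at hx
    simp only [Set.mem_Ioi] at hx
    have hxpos : (0:ℝ) < x := by linarith
    have hd1 : HasDerivAt (fun x : ℝ => x ^ (1 - α)) ((1 - α) * x ^ (1 - α - 1)) x :=
      Real.hasDerivAt_rpow_const (Or.inl hxpos.ne')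
    have hd2 : HasDerivAt (fun x : ℝ => x ^ (1 + α)) ((1 + α) * x ^ (1 + α - 1)) x :=
      Real.hasDerivAt_rpow_const (Or.inl hxpos.ne')
    have hd := (hd1.sub hd2).deriv
    rw [show (fun x : ℝ => x ^ (1 - α) - x ^ (1 + α)) = ((fun x : ℝ => x ^ (1 - α)) - fun x => x ^ (1 + α)) from rfl, hd]
    have e1 : 1 - α - 1 = -α := by ring
    have e2 : 1 + α - 1 = α := by ring
    rw [e1, e2]
    -- goal: (1-α) * x^(-α) - (1+α) * x^α < 0
    have hxa : (0:ℝ) < x ^ α := Real.rpow_pos_of_pos hxpos α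
    have hxna : (0:ℝ) < x ^ (-α) := Real.rpow_pos_of_pos hxpos (-α)
    have hkey : (1 - α) < (1 + α) * x ^ (2*α) := by
      have h2a : ((1:ℝ)/2) ^ (2*α) ≤ x ^ (2*α) := by
        apply Real.rpow_le_rpow (by norm_num) hx.le (by positivity)
      have h4 : ((1:ℝ)/2) ^ (2*α) = ((4:ℝ) ^ α)⁻¹ := by
        rw [show (2*α) = ((2:ℕ):ℝ)*α by norm_num,
          Real.rpow_natCast_mul (by norm_num : (0:ℝ) ≤ 1/2),
          show ((1:ℝ)/2) ^ (2:ℕ) = (4:ℝ)⁻¹ by norm_num,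
          Real.inv_rpow (by norm_num)]
      have h4pos : (0:ℝ) < (4:ℝ) ^ α := Real.rpow_pos_of_pos (by norm_num) α
      have := khat_key α h0 h1
      have hlt : (1 - α) < (1 + α) * ((4:ℝ) ^ α)⁻¹ := by
        rw [lt_mul_inv_iff₀ h4pos]; linarith
      calc (1 - α) < (1 + α) * ((4:ℝ) ^ α)⁻¹ := hlt
        _ = (1 + α) * ((1:ℝ)/2) ^ (2*α) := by rw [h4]
        _ ≤ (1 + α) * x ^ (2*α) := by
            apply mul_le_mul_of_nonneg_left h2a (by linarith)
    have hmul : (1 - α) * x ^ (-α) < (1 + α) * x ^ (2*α) * x ^ (-α) :=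
      mul_lt_mul_of_pos_right hkey hxna
    have hxx : x ^ (2*α) * x ^ (-α) = x ^ α := by
      rw [← Real.rpow_add hxpos]; ring_nf
    rw [mul_assoc, hxx] at hmul
    linarith

theorem khat_strictAnti_above_half (α : ℝ) (hα : α ∈ Set.Ioo (0:ℝ) 1) :
    (∀ x₁ x₂ : ℝ, 1 / 2 ≤ x₂ → x₂ < x₁ →
      x₁ ^ (1 - α) - x₁ ^ (1 + α) < x₂ ^ (1 - α) - x₂ ^ (1 + α)) ∧
    (∀ x : ℝ, 1 / 2 < x →
      x ^ (1 - α) - x ^ (1 + α) < (1 / 2 : ℝ) ^ (1 - α) - (1 / 2 : ℝ) ^ (1 + α)) := by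
  have H := khat_anti α hα
  constructor
  · intro x₁ x₂ h2 h21
    exact H (Set.mem_Ici.mpr h2) (Set.mem_Ici.mpr (by linarith)) h21
  · intro x hx
    exact H (Set.mem_Ici.mpr le_rfl) (Set.mem_Ici.mpr hx.le) hx
end
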